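/- Let B ∈ ℝ^{n×m}, A ∈ ℝ^{n×n}, and let P, P̄ ∈ ℝ^{n×n} be symmetric positive semidefinite. Define K = −(BᵀPB+I)⁻¹BᵀPA and K̄ = −(BᵀP̄B+I)⁻¹BᵀP̄A. If K = K̄ and A + BK is invertible, then BᵀP = BᵀP̄. -/

import Mathlib

theorem Matrix.mul_add_mul_gain_eq_neg {R : Type*} [CommRing R] {n m : Type*} [Fintype n]
    [Fintype m] [DecidableEq m] {A : Matrix n n R} {B : Matrix n m R} {C : Matrix m n R}
    {L : Matrix m n R} (hdet : IsUnit (C * B + 1).det) (hL : L = -((C * B + 1)⁻¹ * (C * A))) :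
    C * (A + B * L) = -L := by
  have hCBL : (C * B + 1) * L = -(C * A) := by
    rw [hL, Matrix.mul_neg, Matrix.mul_nonsing_inv_cancel_left _ _ hdet]
  rw [Matrix.add_mul, Matrix.one_mul] at hCBL
  rw [Matrix.mul_add, ← Matrix.mul_assoc, eq_neg_iff_add_eq_zero, add_assoc, hCBL,
    add_neg_cancel]

theorem Matrix.PosSemidef.transpose_mul_mul_add_one_posDef {n m : Type*} [Fintype n] [Fintype m]
    [DecidableEq m] {Q : Matrix n n ℝ} (hQ : Q.PosSemidef) (B : Matrix n m ℝ) :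
    (B.transpose * Q * B + 1).PosDef :=
  Matrix.PosDef.posSemidef_add (hQ.conjTranspose_mul_mul_same B) Matrix.PosDef.one

theorem stmt_11 {n m : ℕ} (A : Matrix (Fin n) (Fin n) ℝ) (B : Matrix (Fin n) (Fin m) ℝ)
    (P Pbar : Matrix (Fin n) (Fin n) ℝ) (hP : P.PosSemidef) (hPbar : Pbar.PosSemidef)
    (K Kbar : Matrix (Fin m) (Fin n) ℝ)
    (hK : K = -((B.transpose * P * B + 1)⁻¹ * (B.transpose * P * A)))
    (hKbar : Kbar = -((B.transpose * Pbar * B + 1)⁻¹ * (B.transpose * Pbar * A)))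
    (hKK : K = Kbar) (hAcl : IsUnit (A + B * K)) :
    B.transpose * P = B.transpose * Pbar := by
  have hPK : B.transpose * P * (A + B * K) = -K :=
    Matrix.mul_add_mul_gain_eq_neg (hP.transpose_mul_mul_add_one_posDef B).det_pos.ne'.isUnit hK
  have hPbarK : B.transpose * Pbar * (A + B * K) = -K := by
    rw [hKK]
    exact Matrix.mul_add_mul_gain_eq_neg
      (hPbar.transpose_mul_mul_add_one_posDef B).det_pos.ne'.isUnit hKbar
  have := hAcl.invertible
  exact Matrix.mul_left_inj_of_invertible _ |>.mp (hPK.trans hPbarK.symm)
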